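/- arXiv:2503.05644 — 3 statements merged into one kernel-verified Lean document; each statement's English description precedes it below -/
import Mathlib

section
/- Suppose the pair (λ,β) is T-log-symplectic. Then for every i ∈ [1,n] there exist at most two elements θ ∈ S(λ,β) with θ_i = −1 (equivalently, with i ∈ J_θ). -/
open Finset Matrix

noncomputable section

/-- The standard embedding of an integer vector into `ℂⁿ`. -/
def cvec {n : ℕ} (w : Fin n → ℤ) : Fin n → ℂ := fun j => (w j : ℂ)

/-- `J_w = { j : w_j = -1 }`. -/
def Jset {n : ℕ} (w : Fin n → ℤ) : Finset (Fin n) :=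
  Finset.univ.filter (fun j => w j = -1)

/-- The linear map `β : ℂⁿ → V`, `w ↦ ∑ w_j β_j`. -/
def bmap {n : ℕ} {V : Type*} [AddCommGroup V] [Module ℂ V]
    (β : Fin n → V) (w : Fin n → ℂ) : V :=
  ∑ j, w j • β j

/-- The pair `(λ, β)` is T-log-symplectic. -/
def TLogSymp {n : ℕ} {V : Type*} [AddCommGroup V] [Module ℂ V]
    (M : Matrix (Fin n) (Fin n) ℂ) (β : Fin n → V) : Prop :=
  ∀ w : Fin n → ℂ, M.mulVec w = 0 → bmap β w = 0 → w = 0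

/-- The set `W(λ, β)`. -/
def Wset {n : ℕ} {V : Type*} [AddCommGroup V] [Module ℂ V]
    (M : Matrix (Fin n) (Fin n) ℂ) (β : Fin n → V) : Set (Fin n → ℤ) :=
  {w | (∀ j, -1 ≤ w j) ∧ (∀ j, j ∉ Jset w → M.mulVec (cvec w) j = 0) ∧
    bmap β (cvec w) = 0}

/-- The set `S(λ, β)` of smoothable weights. -/
def Sset {n : ℕ} {V : Type*} [AddCommGroup V] [Module ℂ V]
    (M : Matrix (Fin n) (Fin n) ℂ) (β : Fin n → V) : Set (Fin n → ℤ) :=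
  {θ | θ ∈ Wset M β ∧ (Jset θ).card = 2}

/-- `S_m`: sums of exactly `m` elements of `S`, repetitions allowed. -/
def SumOf {n : ℕ} (S : Set (Fin n → ℤ)) (m : ℕ) : Set (Fin n → ℤ) :=
  {w | ∃ l : Multiset (Fin n → ℤ), (∀ x ∈ l, x ∈ S) ∧ Multiset.card l = m ∧ l.sum = w}

/-- `S_{≥ m}`: sums of at least `m` elements of `S`, repetitions allowed. -/
def SumGE {n : ℕ} (S : Set (Fin n → ℤ)) (m : ℕ) : Set (Fin n → ℤ) :=
  {w | ∃ m', m ≤ m' ∧ w ∈ SumOf S m'}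

/-- A vector `w ∈ ℤⁿ` is negatively bordered. -/
def NegBordered {n : ℕ} (w : Fin n → ℤ) : Prop :=
  ∃ j k : Fin n, j < k ∧ w j = -1 ∧ w k = -1 ∧ (∀ i, i < j → w i = 0) ∧
    (∀ i, k < i → w i = 0) ∧ (∀ i, j < i → i < k → 0 ≤ w i)

lemma skewB {n : ℕ} {M : Matrix (Fin n) (Fin n) ℂ} (hskew : Mᵀ = -M) (x y : Fin n → ℂ) :
    x ⬝ᵥ M.mulVec y = -(y ⬝ᵥ M.mulVec x) := by
  rw [Matrix.dotProduct_mulVec, ← Matrix.mulVec_transpose, hskew, Matrix.neg_mulVec,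
    dotProduct_comm, dotProduct_neg]

lemma dot_support {n : ℕ} {f : Fin n → ℂ} (x : Fin n → ℂ) {i j : Fin n} (hij : i ≠ j)
    (hf : ∀ k, k ≠ i → k ≠ j → f k = 0) :
    x ⬝ᵥ f = x i * f i + x j * f j := by
  rw [dotProduct, ← Finset.sum_subset (Finset.subset_univ ({i, j} : Finset (Fin n)))]
  · rw [Finset.sum_pair hij]
  · intro k _ hk
    simp only [Finset.mem_insert, Finset.mem_singleton, not_or] at hk
    rw [hf k hk.1 hk.2, mul_zero]

lemma mulVec_lin {n : ℕ} (M : Matrix (Fin n) (Fin n) ℂ) (a b : ℂ) (u v : Fin n → ℂ) (k : Fin n) :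
    M.mulVec (fun t => a * u t - b * v t) k = a * M.mulVec u k - b * M.mulVec v k := by
  simp only [mulVec, dotProduct, Finset.mul_sum, ← Finset.sum_sub_distrib]
  exact Finset.sum_congr rfl fun t _ => by ring

lemma bmap_lin {n : ℕ} {V : Type*} [AddCommGroup V] [Module ℂ V]
    (β : Fin n → V) (a b : ℂ) (u v : Fin n → ℂ) :
    bmap β (fun k => a * u k - b * v k) = a • bmap β u - b • bmap β v := by
  unfold bmap
  rw [Finset.smul_sum, Finset.smul_sum, ← Finset.sum_sub_distrib]
  exact Finset.sum_congr rfl fun j _ => by rw [sub_smul, mul_smul, mul_smul]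

lemma smooth_data {n : ℕ} {V : Type*} [AddCommGroup V] [Module ℂ V]
    {M : Matrix (Fin n) (Fin n) ℂ} (hskew : Mᵀ = -M) {β : Fin n → V}
    (hTLS : TLogSymp M β) {θ : Fin n → ℤ} (hθ : θ ∈ Sset M β) {i : Fin n}
    (hi : θ i = -1) :
    ∃ j : Fin n, j ≠ i ∧ θ j = -1 ∧
      (∀ k, k ≠ i → k ≠ j → 0 ≤ θ k ∧ M.mulVec (cvec θ) k = 0) ∧
      M.mulVec (cvec θ) j = -(M.mulVec (cvec θ) i) ∧
      M.mulVec (cvec θ) i ≠ 0 := by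
  obtain ⟨⟨hge, hker, hβ⟩, hcard⟩ := hθ
  have hiJ : i ∈ Jset θ := by simp [Jset, hi]
  obtain ⟨a, b, hab, hJ⟩ := Finset.card_eq_two.mp hcard
  have hpair : ∃ j, j ≠ i ∧ Jset θ = {i, j} := by
    rw [hJ] at hiJ
    rcases Finset.mem_insert.mp hiJ with h | h
    · exact ⟨b, by subst h; exact Ne.symm hab, by rw [hJ, h]⟩
    · rw [Finset.mem_singleton] at h
      exact ⟨a, by subst h; exact hab, by rw [hJ, h, Finset.pair_comm]⟩
  obtain ⟨j, hji, hJij⟩ := hpair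
  have hj : θ j = -1 := by
    have : j ∈ Jset θ := by rw [hJij]; simp
    simpa [Jset] using this
  have hoff : ∀ k, k ≠ i → k ≠ j → 0 ≤ θ k ∧ M.mulVec (cvec θ) k = 0 := by
    intro k hki hkj
    have hkJ : k ∉ Jset θ := by rw [hJij]; simp [hki, hkj]
    have hk1 : θ k ≠ -1 := by simpa [Jset] using hkJ
    exact ⟨by have := hge k; omega, hker k hkJ⟩
  have hself : cvec θ ⬝ᵥ M.mulVec (cvec θ) = 0 := by
    have h := skewB hskew (cvec θ) (cvec θ)
    linear_combination h / 2
  rw [dot_support (cvec θ) (Ne.symm hji) (fun k hk1 hk2 => (hoff k hk1 hk2).2)] at hself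
  have hvi : cvec θ i = -1 := by simp [cvec, hi]
  have hvj : cvec θ j = -1 := by simp [cvec, hj]
  rw [hvi, hvj] at hself
  have hrel : M.mulVec (cvec θ) j = -(M.mulVec (cvec θ) i) := by linear_combination -hself
  refine ⟨j, hji, hj, hoff, hrel, ?_⟩
  intro hc0
  have hMz : M.mulVec (cvec θ) = 0 := by
    funext k
    simp only [Pi.zero_apply]
    by_cases hki : k = i
    · subst hki; exact hc0
    · by_cases hkj : k = j
      · subst hkj; rw [hrel, hc0, neg_zero]
      · exact (hoff k hki hkj).2
  have := congrFun (hTLS _ hMz hβ) i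
  simp [cvec, hi] at this

lemma same_j {n : ℕ} {V : Type*} [AddCommGroup V] [Module ℂ V]
    {M : Matrix (Fin n) (Fin n) ℂ} {β : Fin n → V} (hTLS : TLogSymp M β)
    {θ θ' : Fin n → ℤ} {i j : Fin n}
    (hβθ : bmap β (cvec θ) = 0) (hβθ' : bmap β (cvec θ') = 0)
    (hθi : θ i = -1) (hθ'i : θ' i = -1)
    (hker : ∀ k, k ≠ i → k ≠ j → M.mulVec (cvec θ) k = 0)
    (hker' : ∀ k, k ≠ i → k ≠ j → M.mulVec (cvec θ') k = 0)
    (hrel : M.mulVec (cvec θ) j = -(M.mulVec (cvec θ) i))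
    (hrel' : M.mulVec (cvec θ') j = -(M.mulVec (cvec θ') i))
    (hc : M.mulVec (cvec θ) i ≠ 0) : θ = θ' := by
  have hMw : M.mulVec (fun k => M.mulVec (cvec θ') i * cvec θ k
      - M.mulVec (cvec θ) i * cvec θ' k) = 0 := by
    funext k
    simp only [Pi.zero_apply]
    rw [mulVec_lin]
    by_cases hki : k = i
    · subst hki; ring
    · by_cases hkj : k = j
      · subst hkj; rw [hrel, hrel']; ring
      · rw [hker k hki hkj, hker' k hki hkj]; ring
  have hβw : bmap β (fun k => M.mulVec (cvec θ') i * cvec θ k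
      - M.mulVec (cvec θ) i * cvec θ' k) = 0 := by
    rw [bmap_lin, hβθ, hβθ', smul_zero, smul_zero, sub_zero]
  have hw0 := hTLS _ hMw hβw
  have hvi : cvec θ i = -1 := by simp [cvec, hθi]
  have hvi' : cvec θ' i = -1 := by simp [cvec, hθ'i]
  have hcc : M.mulVec (cvec θ') i = M.mulVec (cvec θ) i := by
    have h := congrFun hw0 i
    simp only [Pi.zero_apply, hvi, hvi'] at h
    linear_combination -h
  funext k
  have h := congrFun hw0 k
  simp only [Pi.zero_apply, hcc] at h
  have h2 : M.mulVec (cvec θ) i * (cvec θ k - cvec θ' k) = 0 := by linear_combination h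
  rcases mul_eq_zero.mp h2 with h3 | h3
  · exact absurd h3 hc
  · have h4 : ((θ k : ℤ) : ℂ) = ((θ' k : ℤ) : ℂ) := sub_eq_zero.mp h3
    exact_mod_cast h4

lemma cross_rel {n : ℕ} {M : Matrix (Fin n) (Fin n) ℂ} (hskew : Mᵀ = -M)
    {θa θb : Fin n → ℤ} {i ja jb : Fin n}
    (hai : θa i = -1) (hbi : θb i = -1)
    (hjai : ja ≠ i) (hjbi : jb ≠ i)
    (hkera : ∀ k, k ≠ i → k ≠ ja → M.mulVec (cvec θa) k = 0)
    (hkerb : ∀ k, k ≠ i → k ≠ jb → M.mulVec (cvec θb) k = 0)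
    (hrela : M.mulVec (cvec θa) ja = -(M.mulVec (cvec θa) i))
    (hrelb : M.mulVec (cvec θb) jb = -(M.mulVec (cvec θb) i)) :
    M.mulVec (cvec θb) i * (1 + (θa jb : ℂ))
      = -(M.mulVec (cvec θa) i * (1 + (θb ja : ℂ))) := by
  have hB := skewB hskew (cvec θa) (cvec θb)
  rw [dot_support (cvec θa) (Ne.symm hjbi) hkerb,
    dot_support (cvec θb) (Ne.symm hjai) hkera, hrela, hrelb] at hB
  have hva : cvec θa i = -1 := by simp [cvec, hai]
  have hvb : cvec θb i = -1 := by simp [cvec, hbi]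
  have hwa : cvec θa jb = ((θa jb : ℤ) : ℂ) := rfl
  have hwb : cvec θb ja = ((θb ja : ℤ) : ℂ) := rfl
  rw [hva, hvb, hwa, hwb] at hB
  linear_combination -hB

theorem stmt3 (n : ℕ) (hn : 0 < n) (M : Matrix (Fin n) (Fin n) ℂ) (hskew : Mᵀ = -M)
    {V : Type*} [AddCommGroup V] [Module ℂ V] (β : Fin n → V)
    (hTLS : TLogSymp M β) (i : Fin n) :
    ∀ θ₁ ∈ Sset M β, ∀ θ₂ ∈ Sset M β, ∀ θ₃ ∈ Sset M β,
      θ₁ i = -1 → θ₂ i = -1 → θ₃ i = -1 →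
      θ₁ = θ₂ ∨ θ₁ = θ₃ ∨ θ₂ = θ₃ := by
  intro θ₁ h₁ θ₂ h₂ θ₃ h₃ e₁ e₂ e₃
  by_contra hcon
  push_neg at hcon
  obtain ⟨h12, h13, h23⟩ := hcon
  obtain ⟨j₁, hj₁i, hθ₁j, hd₁, hrel₁, hc₁⟩ := smooth_data hskew hTLS h₁ e₁
  obtain ⟨j₂, hj₂i, hθ₂j, hd₂, hrel₂, hc₂⟩ := smooth_data hskew hTLS h₂ e₂
  obtain ⟨j₃, hj₃i, hθ₃j, hd₃, hrel₃, hc₃⟩ := smooth_data hskew hTLS h₃ e₃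
  have hjj12 : j₁ ≠ j₂ := by
    intro h; subst h
    exact h12 (same_j hTLS h₁.1.2.2 h₂.1.2.2 e₁ e₂
      (fun k hki hkj => (hd₁ k hki hkj).2) (fun k hki hkj => (hd₂ k hki hkj).2)
      hrel₁ hrel₂ hc₁)
  have hjj13 : j₁ ≠ j₃ := by
    intro h; subst h
    exact h13 (same_j hTLS h₁.1.2.2 h₃.1.2.2 e₁ e₃
      (fun k hki hkj => (hd₁ k hki hkj).2) (fun k hki hkj => (hd₃ k hki hkj).2)
      hrel₁ hrel₃ hc₁)
  have hjj23 : j₂ ≠ j₃ := by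
    intro h; subst h
    exact h23 (same_j hTLS h₂.1.2.2 h₃.1.2.2 e₂ e₃
      (fun k hki hkj => (hd₂ k hki hkj).2) (fun k hki hkj => (hd₃ k hki hkj).2)
      hrel₂ hrel₃ hc₂)
  have rel12 := cross_rel hskew e₁ e₂ hj₁i hj₂i
    (fun k hki hkj => (hd₁ k hki hkj).2) (fun k hki hkj => (hd₂ k hki hkj).2) hrel₁ hrel₂
  have rel23 := cross_rel hskew e₂ e₃ hj₂i hj₃i
    (fun k hki hkj => (hd₂ k hki hkj).2) (fun k hki hkj => (hd₃ k hki hkj).2) hrel₂ hrel₃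
  have rel31 := cross_rel hskew e₃ e₁ hj₃i hj₁i
    (fun k hki hkj => (hd₃ k hki hkj).2) (fun k hki hkj => (hd₁ k hki hkj).2) hrel₃ hrel₁
  have hm : (M.mulVec (cvec θ₂) i * (1 + (θ₁ j₂ : ℂ)))
        * (M.mulVec (cvec θ₃) i * (1 + (θ₂ j₃ : ℂ)))
        * (M.mulVec (cvec θ₁) i * (1 + (θ₃ j₁ : ℂ)))
      = (-(M.mulVec (cvec θ₁) i * (1 + (θ₂ j₁ : ℂ))))
        * (-(M.mulVec (cvec θ₂) i * (1 + (θ₃ j₂ : ℂ))))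
        * (-(M.mulVec (cvec θ₃) i * (1 + (θ₁ j₃ : ℂ)))) := by
    rw [rel12, rel23, rel31]
  have hprod : (M.mulVec (cvec θ₁) i * M.mulVec (cvec θ₂) i * M.mulVec (cvec θ₃) i)
      * ((1 + (θ₁ j₂ : ℂ)) * (1 + (θ₂ j₃ : ℂ)) * (1 + (θ₃ j₁ : ℂ))
        + (1 + (θ₂ j₁ : ℂ)) * (1 + (θ₃ j₂ : ℂ)) * (1 + (θ₁ j₃ : ℂ))) = 0 := by
    linear_combination hm
  have hc123 : M.mulVec (cvec θ₁) i * M.mulVec (cvec θ₂) i * M.mulVec (cvec θ₃) i ≠ 0 :=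
    mul_ne_zero (mul_ne_zero hc₁ hc₂) hc₃
  have hPQ : (1 + (θ₁ j₂ : ℂ)) * (1 + (θ₂ j₃ : ℂ)) * (1 + (θ₃ j₁ : ℂ))
      + (1 + (θ₂ j₁ : ℂ)) * (1 + (θ₃ j₂ : ℂ)) * (1 + (θ₁ j₃ : ℂ)) = 0 := by
    rcases mul_eq_zero.mp hprod with h | h
    · exact absurd h hc123
    · exact h
  have hint : (1 + θ₁ j₂) * (1 + θ₂ j₃) * (1 + θ₃ j₁)
      + (1 + θ₂ j₁) * (1 + θ₃ j₂) * (1 + θ₁ j₃) = 0 := by exact_mod_cast hPQ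
  have p12 : (0 : ℤ) < 1 + θ₁ j₂ := by have := (hd₁ j₂ hj₂i (Ne.symm hjj12)).1; omega
  have p23 : (0 : ℤ) < 1 + θ₂ j₃ := by have := (hd₂ j₃ hj₃i (Ne.symm hjj23)).1; omega
  have p31 : (0 : ℤ) < 1 + θ₃ j₁ := by have := (hd₃ j₁ hj₁i hjj13).1; omega
  have p21 : (0 : ℤ) < 1 + θ₂ j₁ := by have := (hd₂ j₁ hj₁i hjj12).1; omega
  have p32 : (0 : ℤ) < 1 + θ₃ j₂ := by have := (hd₃ j₂ hj₂i hjj23).1; omega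
  have p13 : (0 : ℤ) < 1 + θ₁ j₃ := by have := (hd₁ j₃ hj₃i (Ne.symm hjj13)).1; omega
  nlinarith [mul_pos (mul_pos p12 p23) p31, mul_pos (mul_pos p21 p32) p13]
end
end

section
/- Suppose the pair (λ,β) is T-log-symplectic and let S ⊆ S(λ,β) be linearly independent over ℂ. Then no element w of S_{≥2} satisfies both w ∈ W(λ,β) and |J_w| = 3. -/
open Finset Matrix

noncomputable section

/-!
Write `w = ∑ c_θ θ` with `θ ∈ S` and `c_θ > 0`. For `θ ∈ S` with `J_θ = {j, k}`, `λθ` is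
supported on `{j, k}` and skew-symmetry gives `θ ⬝ λθ = 0`, so `λθ = t_θ (e_j - e_k)`; since
`β(θ) = 0`, T-log-symplecticity turns the independence of the `θ` into that of the `λθ`, i.e. the
sets `J_θ` are the edges of a forest on `[1, n]`. Let `y` be a median of `J_w` in this forest:
removing `y` separates the points of `J_w ∖ {y}` from each other. Each component of the forest
minus `y` contains some `v ∈ J_w ∖ {y}`, and the weight `U_v` summed over its edges has
`λU_v` a nonzero multiple of `e_v - e_y`; skew-symmetry then gives
`U_v(y) = U_v(v) ≤ w_v = -1`. Summing over the at least two such `v` gives `w_y ≤ -2`.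
-/

section EdgeFamily

variable {K α ι : Type*} [Field K]

/-- When every `J θ` is a pair `{j, k}`, each `F θ` is a nonzero multiple of `e_j - e_k` and
independence says that the edges `J θ` form a forest. -/
structure IsEdgeFamily [Fintype α] (F : ι → α → K) (J : ι → Finset α) (s : Set ι) : Prop where
  linearIndepOn : LinearIndepOn K F s
  apply_eq_zero : ∀ θ ∈ s, ∀ x ∉ J θ, F θ x = 0
  sum_eq_zero : ∀ θ ∈ s, ∑ x, F θ x = 0

namespace IsEdgeFamily

variable [Fintype α] {F : ι → α → K} {J : ι → Finset α} {s : Set ι}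

lemma exists_ne_zero_mem_of_linearCombination_eq (hE : IsEdgeFamily F J s)
    {d : ι →₀ K} (hd : d ∈ Finsupp.supported K K s) {u : α → K}
    (hdu : Finsupp.linearCombination K F d = u) {x : α} (hx : u x ≠ 0) :
    ∃ θ, d θ ≠ 0 ∧ x ∈ J θ := by
  rw [← hdu, Finsupp.linearCombination_apply, Finsupp.sum, Finset.sum_apply] at hx
  obtain ⟨θ, hθ, hθx⟩ := Finset.exists_ne_zero_of_sum_ne_zero hx
  refine ⟨θ, Finsupp.mem_support_iff.1 hθ, ?_⟩
  by_contra hxθ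
  exact hθx (by simp [hE.apply_eq_zero θ (hd hθ) x hxθ])

lemma sum_linearCombination_apply_eq_zero (hE : IsEdgeFamily F J s) {d : ι →₀ K}
    (hd : d ∈ Finsupp.supported K K s) (P : Finset α)
    (hP : ∀ θ, d θ ≠ 0 → J θ ⊆ P ∨ Disjoint (J θ) P) :
    ∑ x ∈ P, Finsupp.linearCombination K F d x = 0 := by
  simp only [Finsupp.linearCombination_apply, Finsupp.sum, Finset.sum_apply, Pi.smul_apply,
    smul_eq_mul]
  rw [Finset.sum_comm]
  refine Finset.sum_eq_zero fun θ hθ => ?_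
  rw [← Finset.mul_sum]
  have hθs := hd hθ
  rcases hP θ (Finsupp.mem_support_iff.1 hθ) with hJP | hJP
  · rw [Finset.sum_subset (Finset.subset_univ P) fun x _ hx =>
      hE.apply_eq_zero θ hθs x fun hxJ => hx (hJP hxJ), hE.sum_eq_zero θ hθs, mul_zero]
  · rw [Finset.sum_eq_zero fun x hx =>
      hE.apply_eq_zero θ hθs x fun hxJ => Finset.disjoint_left.1 hJP hxJ hx, mul_zero]

lemma sum_sum_smul_apply_eq_zero (hE : IsEdgeFamily F J s) {A : Finset ι} (hA : ↑A ⊆ s)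
    (g : ι → K) : ∑ x, (∑ θ ∈ A, g θ • F θ) x = 0 := by
  simp only [Finset.sum_apply, Pi.smul_apply, smul_eq_mul]
  rw [Finset.sum_comm]
  exact Finset.sum_eq_zero fun θ hθ => by rw [← Finset.mul_sum, hE.sum_eq_zero θ (hA hθ), mul_zero]

lemma eq_empty_of_sum_smul_apply_eq_zero (hE : IsEdgeFamily F J s) {A : Finset ι} (hA : ↑A ⊆ s)
    {g : ι → K} (hg : ∀ θ ∈ A, g θ ≠ 0) {y : α}
    (h : ∀ x ≠ y, (∑ θ ∈ A, g θ • F θ) x = 0) : A = ∅ := by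
  have hzero : ∑ θ ∈ A, g θ • F θ = 0 := by
    funext x
    rw [Pi.zero_apply]
    by_cases hxy : x = y
    · subst hxy
      rw [← hE.sum_sum_smul_apply_eq_zero hA g,
        Finset.sum_eq_single x (fun x' _ hx' => h x' hx') (by simp)]
    · exact h x hxy
  exact Finset.eq_empty_of_forall_notMem fun θ hθ =>
    hg θ hθ (linearIndepOn_iff'.1 hE.linearIndepOn A g (by exact_mod_cast hA) hzero θ hθ)

end IsEdgeFamily

section Linked

variable [DecidableEq α]

def edgeVec (p q : α) : α → K := Pi.single p 1 - Pi.single q 1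

@[simp] lemma edgeVec_self (p : α) : (edgeVec p p : α → K) = 0 := sub_self _

lemma edgeVec_swap (p q : α) : (edgeVec q p : α → K) = -edgeVec p q := (neg_sub _ _).symm

lemma edgeVec_add_edgeVec (p q r : α) : (edgeVec p q + edgeVec q r : α → K) = edgeVec p r := by
  simp only [edgeVec]; abel

lemma edgeVec_apply_left {p q : α} (h : p ≠ q) : (edgeVec p q : α → K) p = 1 := by
  simp [edgeVec, h]

lemma edgeVec_apply_right {p q : α} (h : p ≠ q) : (edgeVec p q : α → K) q = -1 := by
  simp [edgeVec, Ne.symm h]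

lemma dotProduct_edgeVec [Fintype α] (x : α → K) (p q : α) : x ⬝ᵥ edgeVec p q = x p - x q := by
  simp [edgeVec, dotProduct_sub]

lemma sum_edgeVec_apply (P : Finset α) (p q : α) :
    ∑ x ∈ P, (edgeVec p q : α → K) x = (if p ∈ P then 1 else 0) - if q ∈ P then 1 else 0 := by
  simp [edgeVec, Finset.sum_sub_distrib, Finset.sum_pi_single']

lemma eq_smul_edgeVec [Fintype α] {v : α → K} {p q : α} (hpq : p ≠ q)
    (hv : ∀ x, x ≠ p → x ≠ q → v x = 0) (hsum : ∑ x, v x = 0) : v = v p • edgeVec p q := by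
  have hq : v q = -v p := by
    have hpair : ∑ x ∈ {p, q}, v x = ∑ x, v x :=
      Finset.sum_subset (Finset.subset_univ _) fun x _ hx => by
        simp only [Finset.mem_insert, Finset.mem_singleton, not_or] at hx
        exact hv x hx.1 hx.2
    rw [Finset.sum_pair hpq, hsum] at hpair
    linear_combination hpair
  funext x
  by_cases hxp : x = p
  · subst hxp; simp [edgeVec_apply_left hpq]
  by_cases hxq : x = q
  · subst hxq; simp [edgeVec_apply_right hpq, hq]
  · simp [hv x hxp hxq, edgeVec, hxp, hxq]

variable (F : ι → α → K) (J : ι → Finset α)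

/-- `p` and `q` are joined by a path of edges not containing `y`. -/
def LinkedAvoiding (s : Set ι) (y p q : α) : Prop :=
  edgeVec p q ∈ Submodule.span K (F '' {θ ∈ s | y ∉ J θ})

namespace LinkedAvoiding

variable {F J} {s : Set ι} {y p q r : α}

lemma refl (p : α) : LinkedAvoiding F J s y p p := by
  simp [LinkedAvoiding]

lemma symm (h : LinkedAvoiding F J s y p q) : LinkedAvoiding F J s y q p := by
  rw [LinkedAvoiding, edgeVec_swap]; exact neg_mem h

lemma trans (h₁ : LinkedAvoiding F J s y p q) (h₂ : LinkedAvoiding F J s y q r) :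
    LinkedAvoiding F J s y p r := by
  rw [LinkedAvoiding, ← edgeVec_add_edgeVec p q r]; exact add_mem h₁ h₂

lemma mem_span (h : LinkedAvoiding F J s y p q) : edgeVec p q ∈ Submodule.span K (F '' s) :=
  Submodule.span_mono (Set.image_mono fun _ hθ => hθ.1) h

lemma pairwise_not_of_notMem_span (h : edgeVec p q ∉ Submodule.span K (F '' s)) :
    ({p, q} : Set α).Pairwise fun p q => ¬ LinkedAvoiding F J s y p q :=
  Set.pairwise_pair.2 fun _ => ⟨fun h' => h h'.mem_span, fun h' => h h'.symm.mem_span⟩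

end LinkedAvoiding

open Classical in
/-- The edges of the connected component of `v` in the forest with the vertex `y` removed. -/
def componentEdges (s : Finset ι) (y v : α) : Finset ι :=
  s.filter fun θ => ∃ x ∈ J θ, x ≠ y ∧ LinkedAvoiding F J s y x v

lemma mem_componentEdges {s : Finset ι} {y v : α} {θ : ι} :
    θ ∈ componentEdges F J s y v ↔ θ ∈ s ∧ ∃ x ∈ J θ, x ≠ y ∧ LinkedAvoiding F J s y x v := by
  classical
  simp [componentEdges]

lemma componentEdges_subset (s : Finset ι) (y v : α) : componentEdges F J s y v ⊆ s :=
  fun _ hθ => (mem_componentEdges F J).1 hθ |>.1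

namespace IsEdgeFamily

variable [Fintype α] {F J}

lemma not_linkedAvoiding {s : Set ι} (hE : IsEdgeFamily F J s) {d : ι →₀ K}
    (hd : d ∈ Finsupp.supported K K s) {p q y : α}
    (hdpq : Finsupp.linearCombination K F d = edgeVec p q) {θ : ι} (hθ : d θ ≠ 0)
    (hyθ : y ∈ J θ) : ¬ LinkedAvoiding F J s y p q := by
  intro h
  obtain ⟨l, hl, hlpq⟩ := (Finsupp.mem_span_image_iff_linearCombination K).1 h
  have hls : l ∈ Finsupp.supported K K s :=
    Finsupp.supported_mono (fun _ hθ => hθ.1) hl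
  have hld : l = d := sub_eq_zero.1 <| linearIndepOn_iff.1 hE.linearIndepOn _
    (sub_mem hls hd) (by rw [map_sub, hlpq, hdpq, sub_self])
  subst hld
  exact (hl (Finsupp.mem_support_iff.2 hθ)).2 hyθ

/-- The paths `a – c`, `b – c` and `a – b`, represented by `d₁`, `d₂` and `d₁ - d₂`, pass
through a common vertex. -/
lemma exists_common_vertex {s : Set ι} (hE : IsEdgeFamily F J s) {d₁ d₂ : ι →₀ K}
    (hd₁ : d₁ ∈ Finsupp.supported K K s) (hd₂ : d₂ ∈ Finsupp.supported K K s) {a b c : α}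
    (hab : a ≠ b) (hac : a ≠ c) (hbc : b ≠ c)
    (hd₁ac : Finsupp.linearCombination K F d₁ = edgeVec a c)
    (hd₂bc : Finsupp.linearCombination K F d₂ = edgeVec b c) :
    ∃ y, (∃ θ, d₁ θ ≠ 0 ∧ y ∈ J θ) ∧ (∃ θ, d₂ θ ≠ 0 ∧ y ∈ J θ) ∧
      ∃ θ, (d₁ - d₂) θ ≠ 0 ∧ y ∈ J θ := by
  classical
  by_contra! hy
  -- the edges on which `d₁ = d₂` would carry a nonzero total mass of `edgeVec a c`
  let P := Finset.univ.filter fun x => ∃ θ, d₁ θ ≠ 0 ∧ d₁ θ = d₂ θ ∧ x ∈ J θ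
  have hP := hE.sum_linearCombination_apply_eq_zero hd₁ P fun θ hθ => by
    by_cases h₁₂ : d₁ θ = d₂ θ
    · exact Or.inl fun x hx => Finset.mem_filter.2 ⟨Finset.mem_univ x, θ, hθ, h₁₂, hx⟩
    · refine Or.inr (Finset.disjoint_left.2 fun x hx hxP => ?_)
      obtain ⟨θ', h₁, h₁₂', hxθ'⟩ := (Finset.mem_filter.1 hxP).2
      exact hy x ⟨θ', h₁, hxθ'⟩ ⟨θ', h₁₂' ▸ h₁, hxθ'⟩ θ (sub_ne_zero.2 h₁₂) hx
  have hcP : c ∈ P := by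
    obtain ⟨θ, h₁, hcθ⟩ := hE.exists_ne_zero_mem_of_linearCombination_eq hd₁ hd₁ac
      (x := c) (by simp [edgeVec_apply_right hac])
    by_cases h₁₂ : d₁ θ = d₂ θ
    · exact Finset.mem_filter.2 ⟨Finset.mem_univ c, θ, h₁, h₁₂, hcθ⟩
    · exact absurd hcθ <| hy c ⟨θ, h₁, hcθ⟩ (hE.exists_ne_zero_mem_of_linearCombination_eq hd₂
        hd₂bc (x := c) (by simp [edgeVec_apply_right hbc])) θ (sub_ne_zero.2 h₁₂)
  have haP : a ∉ P := fun haP => by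
    obtain ⟨θ', h₁, h₁₂, haθ'⟩ := (Finset.mem_filter.1 haP).2
    have hd₃ab : Finsupp.linearCombination K F (d₁ - d₂) = edgeVec a b := by
      rw [map_sub, hd₁ac, hd₂bc, ← edgeVec_add_edgeVec a b c, add_sub_cancel_right]
    obtain ⟨θ, h₃, haθ⟩ := hE.exists_ne_zero_mem_of_linearCombination_eq (sub_mem hd₁ hd₂)
      hd₃ab (x := a) (by simp [edgeVec_apply_left hab])
    exact hy a ⟨θ', h₁, haθ'⟩ ⟨θ', h₁₂ ▸ h₁, haθ'⟩ θ h₃ haθ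
  rw [hd₁ac, sum_edgeVec_apply, if_neg haP, if_pos hcP] at hP
  norm_num at hP

lemma exists_median {s : Set ι} (hE : IsEdgeFamily F J s) {Q : Finset α} (hQ : Q.card = 3) :
    ∃ y, (↑(Q.erase y) : Set α).Pairwise fun p q => ¬ LinkedAvoiding F J s y p q := by
  obtain ⟨a, b, c, hab, hac, hbc, rfl⟩ := Finset.card_eq_three.1 hQ
  by_cases hac' : edgeVec a c ∈ Submodule.span K (F '' s)
  swap
  · refine ⟨b, (LinkedAvoiding.pairwise_not_of_notMem_span hac').mono ?_⟩
    simp only [Finset.coe_erase, Finset.coe_insert, Finset.coe_singleton]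
    grind
  by_cases hbc' : edgeVec b c ∈ Submodule.span K (F '' s)
  swap
  · refine ⟨a, (LinkedAvoiding.pairwise_not_of_notMem_span hbc').mono ?_⟩
    simp only [Finset.coe_erase, Finset.coe_insert, Finset.coe_singleton]
    grind
  obtain ⟨d₁, hd₁, hd₁ac⟩ := (Finsupp.mem_span_image_iff_linearCombination K).1 hac'
  obtain ⟨d₂, hd₂, hd₂bc⟩ := (Finsupp.mem_span_image_iff_linearCombination K).1 hbc'
  have hd₃ab : Finsupp.linearCombination K F (d₁ - d₂) = edgeVec a b := by
    rw [map_sub, hd₁ac, hd₂bc, ← edgeVec_add_edgeVec a b c, add_sub_cancel_right]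
  obtain ⟨y, ⟨θ₁, h₁, hy₁⟩, ⟨θ₂, h₂, hy₂⟩, θ₃, h₃, hy₃⟩ :=
    hE.exists_common_vertex hd₁ hd₂ hab hac hbc hd₁ac hd₂bc
  have nac := hE.not_linkedAvoiding hd₁ hd₁ac h₁ hy₁
  have nbc := hE.not_linkedAvoiding hd₂ hd₂bc h₂ hy₂
  have nab := hE.not_linkedAvoiding (sub_mem hd₁ hd₂) hd₃ab h₃ hy₃
  refine ⟨y, Set.Pairwise.mono (Finset.coe_subset.2 (Finset.erase_subset _ _)) ?_⟩
  simp only [Finset.coe_insert, Finset.coe_singleton, Set.pairwise_insert,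
    Set.pairwise_singleton, Set.mem_insert_iff, Set.mem_singleton_iff]
  refine ⟨⟨trivial, fun x hx _ => hx ▸ ⟨nbc, fun h => nbc h.symm⟩⟩, ?_⟩
  rintro x (hx | hx) -
  · exact hx ▸ ⟨nab, fun h => nab h.symm⟩
  · exact hx ▸ ⟨nac, fun h => nac h.symm⟩

lemma linkedAvoiding_of_mem {s : Finset ι} (hE : IsEdgeFamily F J s) (hJ : ∀ θ ∈ s, (J θ).card = 2)
    {θ : ι} (hθ : θ ∈ s) {y j k : α} (hy : y ∉ J θ) (hj : j ∈ J θ) (hk : k ∈ J θ) :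
    LinkedAvoiding F J s y j k := by
  by_cases hjk : j = k
  · exact hjk ▸ LinkedAvoiding.refl j
  have hJθ : J θ = {j, k} := (Finset.eq_of_subset_of_card_le
    (Finset.insert_subset hj (Finset.singleton_subset_iff.2 hk))
    (by rw [hJ θ hθ, Finset.card_pair hjk])).symm
  set t := F θ j
  have hF : F θ = t • edgeVec j k := eq_smul_edgeVec hjk
    (fun x hxj hxk => hE.apply_eq_zero θ hθ x (by simp [hJθ, hxj, hxk]))
    (hE.sum_eq_zero θ hθ)
  have ht : t ≠ 0 := fun h0 => hE.linearIndepOn.ne_zero hθ (by rw [hF, h0, zero_smul])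
  have hjk' : edgeVec j k = t⁻¹ • F θ := by rw [hF, smul_smul, inv_mul_cancel₀ ht, one_smul]
  rw [LinkedAvoiding, hjk']
  exact Submodule.smul_mem _ _ (Submodule.subset_span ⟨θ, ⟨hθ, hy⟩, rfl⟩)

lemma linkedAvoiding_of_mem_componentEdges {s : Finset ι} (hE : IsEdgeFamily F J s)
    (hJ : ∀ θ ∈ s, (J θ).card = 2) {y v x : α} {θ : ι} (hθ : θ ∈ componentEdges F J s y v)
    (hx : x ∈ J θ) (hxy : x ≠ y) : LinkedAvoiding F J s y x v := by
  obtain ⟨hθs, x', hx', hx'y, hx'v⟩ := (mem_componentEdges F J).1 hθ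
  by_cases hyθ : y ∈ J θ
  · have hxx' : x = x' := by
      by_contra hne
      have := Finset.two_lt_card_iff.2 ⟨x, x', y, hx, hx', hyθ, hne, hxy, hx'y⟩
      rw [hJ θ hθs] at this
      omega
    exact hxx' ▸ hx'v
  · exact (hE.linkedAvoiding_of_mem hJ hθs hyθ hx hx').trans hx'v

lemma mem_componentEdges_iff {s : Finset ι} (hE : IsEdgeFamily F J s) (hJ : ∀ θ ∈ s, (J θ).card = 2)
    {y v x : α} {θ : ι} (hθ : θ ∈ s) (hx : x ∈ J θ) (hxy : x ≠ y) :
    θ ∈ componentEdges F J s y v ↔ LinkedAvoiding F J s y x v :=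
  ⟨fun h => hE.linkedAvoiding_of_mem_componentEdges hJ h hx hxy,
    fun h => (mem_componentEdges F J).2 ⟨hθ, x, hx, hxy, h⟩⟩

lemma sum_componentEdges_smul_apply_eq_zero {s : Finset ι} (hE : IsEdgeFamily F J s)
    (hJ : ∀ θ ∈ s, (J θ).card = 2) (g : ι → K) {y v x : α} (hxy : x ≠ y)
    (hx : LinkedAvoiding F J s y x v → (∑ θ ∈ s, g θ • F θ) x = 0) :
    (∑ θ ∈ componentEdges F J s y v, g θ • F θ) x = 0 := by
  by_cases h : LinkedAvoiding F J s y x v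
  · rw [← hx h, Finset.sum_apply, Finset.sum_apply]
    refine Finset.sum_subset (componentEdges_subset F J s y v) fun θ hθ hθc => ?_
    have hxθ : x ∉ J θ := fun hx => hθc ((hE.mem_componentEdges_iff hJ hθ hx hxy).2 h)
    rw [Pi.smul_apply, hE.apply_eq_zero θ hθ x hxθ, smul_zero]
  · rw [Finset.sum_apply]
    refine Finset.sum_eq_zero fun θ hθ => ?_
    have hxθ : x ∉ J θ := fun hx => h (hE.linkedAvoiding_of_mem_componentEdges hJ hθ hx hxy)
    rw [Pi.smul_apply, hE.apply_eq_zero θ (componentEdges_subset F J s y v hθ) x hxθ, smul_zero]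

lemma disjoint_componentEdges {s : Finset ι} (hE : IsEdgeFamily F J s)
    (hJ : ∀ θ ∈ s, (J θ).card = 2) {y v v' : α} (hvv' : ¬ LinkedAvoiding F J s y v v') :
    Disjoint (componentEdges F J s y v) (componentEdges F J s y v') := by
  refine Finset.disjoint_left.2 fun θ hθ hθ' => hvv' ?_
  obtain ⟨-, x, hx, hxy, hxv⟩ := (mem_componentEdges F J).1 hθ
  exact hxv.symm.trans (hE.linkedAvoiding_of_mem_componentEdges hJ hθ' hx hxy)

end IsEdgeFamily

end Linked

end EdgeFamily

lemma dotProduct_mulVec_self_eq_zero {R ι : Type*} [CommRing R] [NoZeroDivisors R]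
    [NeZero (2 : R)] [Fintype ι] {A : Matrix ι ι R} (hA : Aᵀ = -A) (x : ι → R) :
    x ⬝ᵥ A *ᵥ x = 0 := by
  have h := Matrix.dotProduct_mulVec x A x
  rw [← Matrix.mulVec_transpose, hA, Matrix.neg_mulVec, neg_dotProduct,
    dotProduct_comm (A *ᵥ x)] at h
  have h₂ : (2 : R) * (x ⬝ᵥ A *ᵥ x) = 0 := by linear_combination h
  exact (mul_eq_zero.1 h₂).resolve_left two_ne_zero

section Weights

variable {n : ℕ} {V : Type*} [AddCommGroup V] [Module ℂ V] {M : Matrix (Fin n) (Fin n) ℂ}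
  {β : Fin n → V}

lemma mem_Jset {w : Fin n → ℤ} {x : Fin n} : x ∈ Jset w ↔ w x = -1 := by
  simp [Jset]

lemma nonneg_of_notMem_Jset {w : Fin n → ℤ} (hw : w ∈ Wset M β) {x : Fin n}
    (hx : x ∉ Jset w) : 0 ≤ w x := by
  have h₁ := hw.1 x
  have h₂ : w x ≠ -1 := fun h => hx (mem_Jset.2 h)
  omega

lemma sum_mulVec_cvec_apply_eq_zero (hskew : Mᵀ = -M) {w : Fin n → ℤ} (hw : w ∈ Wset M β) :
    ∑ x, (M *ᵥ cvec w) x = 0 := by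
  have hterm : ∀ x, cvec w x * (M *ᵥ cvec w) x = -(M *ᵥ cvec w) x := fun x => by
    by_cases hx : x ∈ Jset w
    · simp [cvec, mem_Jset.1 hx]
    · simp [hw.2.1 x hx]
  have h := dotProduct_mulVec_self_eq_zero hskew (cvec w)
  simpa only [dotProduct, hterm, Finset.sum_neg_distrib, neg_eq_zero] using h

lemma mulVec_cvec_sum_nsmul (A : Finset (Fin n → ℤ)) (c : (Fin n → ℤ) → ℕ) :
    M *ᵥ cvec (∑ θ ∈ A, c θ • θ) = ∑ θ ∈ A, (c θ : ℂ) • M *ᵥ cvec θ := by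
  have hcvec : cvec (∑ θ ∈ A, c θ • θ) = ∑ θ ∈ A, (c θ : ℂ) • cvec θ := by
    funext x
    simp [cvec, Finset.sum_apply]
  rw [hcvec, ← Matrix.mulVecLin_apply, map_sum]
  simp

lemma linearIndepOn_mulVec_cvec (hTLS : TLogSymp M β) {S : Set (Fin n → ℤ)}
    (hβ : ∀ θ ∈ S, bmap β (cvec θ) = 0) (hS : LinearIndepOn ℂ cvec S) :
    LinearIndepOn ℂ (M *ᵥ cvec ·) S := by
  have hker : Submodule.span ℂ (Set.range fun θ : S => cvec (θ : Fin n → ℤ)) ≤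
      LinearMap.ker (Fintype.linearCombination ℂ β) :=
    Submodule.span_le.2 <| Set.range_subset_iff.2 fun θ => hβ θ θ.2
  refine LinearIndependent.map hS (f := M.mulVecLin) (Submodule.disjoint_def.2 fun u hu hMu => ?_)
  exact hTLS u hMu (hker hu)

lemma isEdgeFamily_mulVec_cvec (hskew : Mᵀ = -M) (hTLS : TLogSymp M β) {S : Set (Fin n → ℤ)}
    (hSW : S ⊆ Wset M β) (hS : LinearIndepOn ℂ cvec S) :
    IsEdgeFamily (M *ᵥ cvec ·) Jset S where
  linearIndepOn := linearIndepOn_mulVec_cvec hTLS (fun _ hθ => (hSW hθ).2.2) hS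
  apply_eq_zero _ hθ := (hSW hθ).2.1
  sum_eq_zero _ hθ := sum_mulVec_cvec_apply_eq_zero hskew (hSW hθ)

end Weights

section Components

variable {n : ℕ} {V : Type*} [AddCommGroup V] [Module ℂ V] {M : Matrix (Fin n) (Fin n) ℂ}
  {β : Fin n → V} {T : Finset (Fin n → ℤ)} {c : (Fin n → ℤ) → ℕ} {w : Fin n → ℤ} {y : Fin n}

lemma sum_nsmul_apply_nonneg {A : Finset (Fin n → ℤ)} (hA : ↑A ⊆ Wset M β) {x : Fin n}
    (hx : ∀ θ ∈ A, x ∉ Jset θ) : 0 ≤ (∑ θ ∈ A, c θ • θ) x := by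
  rw [Finset.sum_apply]
  exact Finset.sum_nonneg fun θ hθ => nsmul_nonneg (nonneg_of_notMem_Jset (hA hθ) (hx θ hθ)) _

lemma exists_mem_Jset_of_mem_Jset (hT : ↑T ⊆ Wset M β) (hwT : ∑ θ ∈ T, c θ • θ = w)
    {v : Fin n} (hv : v ∈ Jset w) : ∃ θ ∈ T, v ∈ Jset θ := by
  by_contra! h
  have := sum_nsmul_apply_nonneg (c := c) hT h
  rw [hwT, mem_Jset.1 hv] at this
  omega

lemma exists_ne_mulVec_cvec_sum_componentEdges_apply_ne_zero
    (hE : IsEdgeFamily (M *ᵥ cvec ·) Jset ↑T) (hc : ∀ θ ∈ T, 0 < c θ) {v : Fin n}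
    {θ : Fin n → ℤ} (hθ : θ ∈ componentEdges (M *ᵥ cvec ·) Jset T y v) :
    ∃ x ≠ y, (M *ᵥ cvec (∑ θ ∈ componentEdges (M *ᵥ cvec ·) Jset T y v, c θ • θ)) x ≠ 0 := by
  by_contra! h
  have hsub := componentEdges_subset (M *ᵥ cvec ·) Jset T y v
  have hempty := hE.eq_empty_of_sum_smul_apply_eq_zero (by exact_mod_cast hsub)
    (g := fun θ => (c θ : ℂ)) (fun θ hθ => Nat.cast_ne_zero.2 (hc θ (hsub hθ)).ne')
    fun x hxy => by rw [← mulVec_cvec_sum_nsmul]; exact h x hxy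
  simp [hempty] at hθ

lemma mulVec_cvec_sum_componentEdges_apply_eq_zero (hE : IsEdgeFamily (M *ᵥ cvec ·) Jset ↑T)
    (hT : ↑T ⊆ Sset M β) (hw : w ∈ Wset M β) (hwT : ∑ θ ∈ T, c θ • θ = w) {v x : Fin n}
    (hxy : x ≠ y) (hx : LinkedAvoiding (M *ᵥ cvec ·) Jset T y x v → x ∉ Jset w) :
    (M *ᵥ cvec (∑ θ ∈ componentEdges (M *ᵥ cvec ·) Jset T y v, c θ • θ)) x = 0 := by
  rw [mulVec_cvec_sum_nsmul]
  refine hE.sum_componentEdges_smul_apply_eq_zero (fun θ hθ => (hT hθ).2) _ hxy fun h => ?_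
  rw [← mulVec_cvec_sum_nsmul, hwT]
  exact hw.2.1 x (hx h)

lemma exists_mem_erase_linkedAvoiding (hE : IsEdgeFamily (M *ᵥ cvec ·) Jset ↑T)
    (hT : ↑T ⊆ Sset M β) (hc : ∀ θ ∈ T, 0 < c θ) (hw : w ∈ Wset M β)
    (hwT : ∑ θ ∈ T, c θ • θ = w) {θ : Fin n → ℤ} (hθ : θ ∈ T) {x : Fin n} (hx : x ∈ Jset θ)
    (hxy : x ≠ y) : ∃ v ∈ (Jset w).erase y, LinkedAvoiding (M *ᵥ cvec ·) Jset T y x v := by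
  by_contra! h
  have hθx := (hE.mem_componentEdges_iff (fun θ hθ => (hT hθ).2) hθ hx hxy).2
    (LinkedAvoiding.refl x)
  obtain ⟨x', hx'y, hx'⟩ := exists_ne_mulVec_cvec_sum_componentEdges_apply_ne_zero hE hc hθx
  exact hx' <| mulVec_cvec_sum_componentEdges_apply_eq_zero hE hT hw hwT hx'y
    fun hx'x hx'w => h x' (Finset.mem_erase.2 ⟨hx'y, hx'w⟩) hx'x.symm

lemma sum_componentEdges_apply_self_le (hE : IsEdgeFamily (M *ᵥ cvec ·) Jset ↑T)
    (hT : ↑T ⊆ Sset M β) (hwT : ∑ θ ∈ T, c θ • θ = w) {v : Fin n} (hvw : v ∈ Jset w)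
    (hvy : v ≠ y) : (∑ θ ∈ componentEdges (M *ᵥ cvec ·) Jset T y v, c θ • θ) v ≤ -1 := by
  have hsplit := Finset.sum_sdiff (componentEdges_subset (M *ᵥ cvec ·) Jset T y v)
    (f := fun θ => c θ • θ)
  have hrest := sum_nsmul_apply_nonneg (c := c) (x := v)
    (A := T \ componentEdges (M *ᵥ cvec ·) Jset T y v)
    (fun θ hθ => (hT (Finset.mem_sdiff.1 hθ).1).1) fun θ hθ hvθ =>
      (Finset.mem_sdiff.1 hθ).2 <| (hE.mem_componentEdges_iff (fun θ hθ => (hT hθ).2)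
        (Finset.mem_sdiff.1 hθ).1 hvθ hvy).2 (LinkedAvoiding.refl v)
  have hv := congrFun hsplit v
  rw [Pi.add_apply, hwT, mem_Jset.1 hvw] at hv
  omega

/-- The image of a component meeting `J_w ∖ {y}` only in `v` is a multiple of `e_v - e_y`,
so skew-symmetry forces its weight to take equal values at `v` and `y`. -/
lemma sum_componentEdges_apply_eq (hskew : Mᵀ = -M) (hE : IsEdgeFamily (M *ᵥ cvec ·) Jset ↑T)
    (hT : ↑T ⊆ Sset M β) (hc : ∀ θ ∈ T, 0 < c θ) (hw : w ∈ Wset M β)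
    (hwT : ∑ θ ∈ T, c θ • θ = w)
    (hy : (↑((Jset w).erase y) : Set (Fin n)).Pairwise
      fun p q => ¬ LinkedAvoiding (M *ᵥ cvec ·) Jset T y p q)
    {v : Fin n} (hv : v ∈ (Jset w).erase y) :
    (∑ θ ∈ componentEdges (M *ᵥ cvec ·) Jset T y v, c θ • θ) y =
      (∑ θ ∈ componentEdges (M *ᵥ cvec ·) Jset T y v, c θ • θ) v := by
  obtain ⟨hvy, hvw⟩ := Finset.mem_erase.1 hv
  set U := ∑ θ ∈ componentEdges (M *ᵥ cvec ·) Jset T y v, c θ • θ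
  have hoff : ∀ x, x ≠ v → x ≠ y → (M *ᵥ cvec U) x = 0 := fun x hxv hxy =>
    mulVec_cvec_sum_componentEdges_apply_eq_zero hE hT hw hwT hxy fun hxv' hxw =>
      hy (Finset.mem_erase.2 ⟨hxy, hxw⟩) hv hxv hxv'
  have hsum : ∑ x, (M *ᵥ cvec U) x = 0 := by
    rw [mulVec_cvec_sum_nsmul]
    exact hE.sum_sum_smul_apply_eq_zero
      (by exact_mod_cast componentEdges_subset (M *ᵥ cvec ·) Jset T y v) _
  have hUv : (M *ᵥ cvec U) v ≠ 0 := by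
    intro h0
    obtain ⟨θ, hθ, hvθ⟩ := exists_mem_Jset_of_mem_Jset (fun θ hθ => (hT hθ).1) hwT hvw
    obtain ⟨x, hxy, hx⟩ := exists_ne_mulVec_cvec_sum_componentEdges_apply_ne_zero hE hc
      ((hE.mem_componentEdges_iff (fun θ hθ => (hT hθ).2) hθ hvθ hvy).2 (LinkedAvoiding.refl v))
    by_cases hxv : x = v
    · rw [hxv] at hx
      exact hx h0
    · exact hx (hoff x hxv hxy)
  have hdot := dotProduct_mulVec_self_eq_zero hskew (cvec U)
  rw [eq_smul_edgeVec hvy hoff hsum, dotProduct_smul, dotProduct_edgeVec, smul_eq_mul,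
    mul_eq_zero, sub_eq_zero] at hdot
  exact Int.cast_injective (α := ℂ) (hdot.resolve_left hUv).symm

theorem notMem_Wset_of_pairwise_not_linkedAvoiding (hskew : Mᵀ = -M)
    (hE : IsEdgeFamily (M *ᵥ cvec ·) Jset ↑T) (hT : ↑T ⊆ Sset M β) (hc : ∀ θ ∈ T, 0 < c θ)
    (hwT : ∑ θ ∈ T, c θ • θ = w)
    (hy : (↑((Jset w).erase y) : Set (Fin n)).Pairwise
      fun p q => ¬ LinkedAvoiding (M *ᵥ cvec ·) Jset T y p q)
    (hcard : 2 ≤ ((Jset w).erase y).card) : w ∉ Wset M β := by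
  intro hw
  set A := componentEdges (M *ᵥ cvec ·) Jset T y
  have hJ : ∀ θ ∈ T, (Jset θ).card = 2 := fun θ hθ => (hT hθ).2
  have hcover : T = ((Jset w).erase y).biUnion A := by
    refine Finset.Subset.antisymm (fun θ hθ => ?_) (Finset.biUnion_subset.2 fun v _ =>
      componentEdges_subset _ _ T y v)
    obtain ⟨x, hx, hxy⟩ := Finset.exists_mem_ne (by rw [hJ θ hθ]; norm_num) y
    obtain ⟨v, hv, hxv⟩ := exists_mem_erase_linkedAvoiding hE hT hc hw hwT hθ hx hxy
    exact Finset.mem_biUnion.2 ⟨v, hv, (hE.mem_componentEdges_iff hJ hθ hx hxy).2 hxv⟩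
  have hwy : w y = ∑ v ∈ (Jset w).erase y, (∑ θ ∈ A v, c θ • θ) y := by
    rw [← Finset.sum_apply, ← Finset.sum_biUnion fun v hv v' hv' hvv' =>
      hE.disjoint_componentEdges hJ (hy hv hv' hvv'), ← hcover, hwT]
  have hle : ∀ v ∈ (Jset w).erase y, (∑ θ ∈ A v, c θ • θ) y ≤ -1 := fun v hv => by
    rw [sum_componentEdges_apply_eq hskew hE hT hc hw hwT hy hv]
    exact sum_componentEdges_apply_self_le hE hT hwT (Finset.mem_of_mem_erase hv)
      (Finset.ne_of_mem_erase hv)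
  have := Finset.sum_le_sum hle
  rw [← hwy, Finset.sum_const, nsmul_eq_mul, mul_neg_one] at this
  have := hw.1 y
  omega

end Components

theorem stmt5_general (n : ℕ) (M : Matrix (Fin n) (Fin n) ℂ) (hskew : Mᵀ = -M)
    {V : Type*} [AddCommGroup V] [Module ℂ V] (β : Fin n → V)
    (hTLS : TLogSymp M β) (S : Set (Fin n → ℤ)) (hS : S ⊆ Sset M β)
    (hindep : LinearIndependent ℂ (fun θ : S => cvec (θ : Fin n → ℤ))) :
    ∀ w ∈ SumGE S 2, ¬(w ∈ Wset M β ∧ (Jset w).card = 3) := by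
  rintro w ⟨-, -, l, hlS, -, hlw⟩ ⟨hw, hwJ⟩
  have hTS : ↑l.toFinset ⊆ S := fun θ hθ => hlS θ (Multiset.mem_toFinset.1 hθ)
  have hE : IsEdgeFamily (M *ᵥ cvec ·) Jset ↑l.toFinset :=
    isEdgeFamily_mulVec_cvec hskew hTLS (fun θ hθ => (hS (hTS hθ)).1)
      (LinearIndepOn.mono hindep hTS)
  obtain ⟨y, hy⟩ := hE.exists_median hwJ
  refine notMem_Wset_of_pairwise_not_linkedAvoiding hskew hE (hTS.trans hS)
    (fun θ hθ => Multiset.count_pos.2 (Multiset.mem_toFinset.1 hθ))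
    ((Finset.sum_multiset_count l).symm.trans hlw) hy ?_ hw
  have := Finset.pred_card_le_card_erase (s := Jset w) (a := y)
  omega

theorem stmt5 (n : ℕ) (hn : 0 < n) (M : Matrix (Fin n) (Fin n) ℂ) (hskew : Mᵀ = -M)
    {V : Type*} [AddCommGroup V] [Module ℂ V] (β : Fin n → V)
    (hTLS : TLogSymp M β) (S : Set (Fin n → ℤ)) (hS : S ⊆ Sset M β)
    (hindep : LinearIndependent ℂ (fun θ : S => cvec (θ : Fin n → ℤ))) :
    ∀ w ∈ SumGE S 2, ¬(w ∈ Wset M β ∧ (Jset w).card = 3) :=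
  stmt5_general n M hskew β hTLS S hS hindep
end
end

section
/- Let β_1,…,β_n be a T-action datum in V, let D = diag(λ_1,…,λ_n), and let Q be the n×n upper triangular complex matrix with Q_{jj} = 1, Q_{jk} = a_{γ_j,γ_k} for j < k and Q_{jk} = 0 for j > k. For a ∈ ℂ^n and ξ ∈ V, write ξ⃗ = (⟨ξ,β_1⟩,…,⟨ξ,β_n⟩)^t ∈ ℂ^n. Then there exists w ∈ ℂ^n with λw = a and β(w) = ξ if and only if ξ = Σ_{j=1}^n λ_j^{−1}(⟨ξ,β_j⟩ − a_j) γ_j; and in that case the solution w is unique and is given by w = QD^{−1}(ξ⃗ − a). -/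
open Finset Matrix

noncomputable section

/-- The Cartan number `a_{b,ξ} = 2⟨b,ξ⟩/⟨b,b⟩`. -/
def cartan {V : Type*} [AddCommGroup V] [Module ℂ V]
    (B : V →ₗ[ℂ] V →ₗ[ℂ] ℂ) (b ξ : V) : ℂ :=
  2 * B b ξ / B b b

/-- The reflection `s_b(ξ) = ξ - a_{b,ξ} b`. -/
def sRefl {V : Type*} [AddCommGroup V] [Module ℂ V]
    (B : V →ₗ[ℂ] V →ₗ[ℂ] ℂ) (b ξ : V) : V :=
  ξ - cartan B b ξ • b

/-- `reflL B g m = s_{g 0} ∘ s_{g 1} ∘ ⋯ ∘ s_{g (m-1)}`. -/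
def reflL {V : Type*} [AddCommGroup V] [Module ℂ V]
    (B : V →ₗ[ℂ] V →ₗ[ℂ] ℂ) (g : ℕ → V) : ℕ → V → V
  | 0, ξ => ξ
  | m + 1, ξ => reflL B g m (sRefl B (g m) ξ)

/-- `reflR B g m = s_{g (m-1)} ∘ ⋯ ∘ s_{g 1} ∘ s_{g 0}`. -/
def reflR {V : Type*} [AddCommGroup V] [Module ℂ V]
    (B : V →ₗ[ℂ] V →ₗ[ℂ] ℂ) (g : ℕ → V) : ℕ → V → V
  | 0, ξ => ξ
  | m + 1, ξ => sRefl B (g m) (reflR B g m ξ)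

/-- Extension of a `Fin n`-indexed family to `ℕ` by zero. -/
def gext {n : ℕ} {V : Type*} [AddCommGroup V] (v : Fin n → V) : ℕ → V :=
  fun t => if h : t < n then v ⟨t, h⟩ else 0

/-- `γ_j = s_{β_1} s_{β_2} ⋯ s_{β_{j-1}} (β_j)`. -/
def gam {n : ℕ} {V : Type*} [AddCommGroup V] [Module ℂ V]
    (B : V →ₗ[ℂ] V →ₗ[ℂ] ℂ) (β : Fin n → V) (j : Fin n) : V :=
  reflL B (gext β) j.val (β j)

/-- The Poisson coefficient matrix `λ` of a T-action datum: `λ_{jk} = -⟨β_j, β_k⟩` for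
`j < k`, `⟨β_j, β_k⟩` for `j > k`, and `0` on the diagonal. -/
def lam {n : ℕ} {V : Type*} [AddCommGroup V] [Module ℂ V]
    (B : V →ₗ[ℂ] V →ₗ[ℂ] ℂ) (β : Fin n → V) : Matrix (Fin n) (Fin n) ℂ :=
  Matrix.of fun j k =>
    if j < k then -(B (β j) (β k)) else if k < j then B (β j) (β k) else 0

/-- The upper triangular matrix `Q` with `Q_{jj} = 1` and `Q_{jk} = a_{γ_j, γ_k}` for
`j < k`. -/
def Qmat {n : ℕ} {V : Type*} [AddCommGroup V] [Module ℂ V]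
    (B : V →ₗ[ℂ] V →ₗ[ℂ] ℂ) (γ : Fin n → V) : Matrix (Fin n) (Fin n) ℂ :=
  Matrix.of fun j k => if j = k then 1 else if j < k then cartan B (γ j) (γ k) else 0

open scoped Classical in
/-- The set `{k ∈ [j+1, n] : γ_k = γ_j}`, whose minimum (when it exists) is `j⁺`. -/
def plusSet {n : ℕ} {V : Type*} (γ : Fin n → V) (j : Fin n) : Finset (Fin n) :=
  Finset.univ.filter (fun k => j < k ∧ γ k = γ j)

/-- `e_{j⁺} ∈ ℂⁿ`, with the convention `e_{+∞} = 0`. -/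
def eplus {n : ℕ} {V : Type*} (γ : Fin n → V) (j : Fin n) : Fin n → ℂ :=
  if h : (plusSet γ j).Nonempty then Pi.single ((plusSet γ j).min' h) 1 else 0

/-- `θ^{(j)} = Q (e_j - e_{j⁺}) ∈ ℂⁿ`. -/
def thetaC {n : ℕ} {V : Type*} [AddCommGroup V] [Module ℂ V]
    (B : V →ₗ[ℂ] V →ₗ[ℂ] ℂ) (β : Fin n → V) (j : Fin n) : Fin n → ℂ :=
  (Qmat B (gam B β)).mulVec ((Pi.single j 1 : Fin n → ℂ) - eplus (gam B β) j)

/-- The linear map `β : ℂⁿ → V`, `w ↦ ∑ w_j β_j`, as a bundled linear map. -/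
def betaLin {n : ℕ} {V : Type*} [AddCommGroup V] [Module ℂ V]
    (β : Fin n → V) : (Fin n → ℂ) →ₗ[ℂ] V where
  toFun w := ∑ j, w j • β j
  map_add' x y := by simp [add_smul, Finset.sum_add_distrib]
  map_smul' a x := by simp [Finset.smul_sum, smul_smul]

/-!
Write `P_m = s_{β_1} ⋯ s_{β_m}`. As `P_m = P_{m-1} s_{β_m}` and `P_{m-1} β_m = γ_m`,
unrolling gives `P_m ξ = ξ - ∑_{j ≤ m} a_{β_j,ξ} γ_j`; at `ξ = β_k` this reads
`β_k = ∑_j R_{jk} γ_j`, where `R` is built from the `β_j` as `Q` is from the `γ_j`.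
Unrolling `P_m⁻¹ = s_{β_m} ⋯ s_{β_1}` in the same way gives `γ_k = ∑_j Q_{jk} β_j`.
Pairing the two expansions, and using that `DQ + QᵀD` and `DR + RᵀD` are twice the Gram
matrices of the `γ_j` and of the `β_j`, yields `D (QR) = (RQ)ᵀ D`: upper triangular on the
left, lower triangular on the right, so `QR = 1`. Finally
`⟨β(w), β_j⟩ - (λw)_j = λ_j (Rw)_j` and `β(w) = ∑_j (Rw)_j γ_j`, so `λw = a, β(w) = ξ` means
exactly `Rw = D⁻¹(ξ⃗ - a)` and `ξ = ∑_j (Rw)_j γ_j`.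
-/
section Reflections

variable {V : Type*} [AddCommGroup V] [Module ℂ V] (B : V →ₗ[ℂ] V →ₗ[ℂ] ℂ)

lemma cartan_sRefl_self (b x : V) : cartan B b (sRefl B b x) = -cartan B b x := by
  by_cases hb : B b b = 0
  · simp [cartan, hb]
  · simp only [cartan, sRefl, map_sub, map_smul, smul_eq_mul]
    field_simp
    ring

lemma sRefl_sRefl (b x : V) : sRefl B b (sRefl B b x) = x := by
  rw [sRefl, cartan_sRefl_self, sRefl]
  module

lemma sRefl_sub_smul (b x y : V) (c : ℂ) :
    sRefl B b (x - c • y) = sRefl B b x - c • sRefl B b y := by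
  simp only [sRefl, cartan, map_sub, map_smul, smul_eq_mul]
  module

lemma apply_sRefl_sRefl (hB : ∀ x y, B x y = B y x) (b x y : V) :
    B (sRefl B b x) (sRefl B b y) = B x y := by
  by_cases hb : B b b = 0
  · simp [sRefl, cartan, hb]
  · simp only [sRefl, cartan, map_sub, map_smul, smul_eq_mul, LinearMap.sub_apply,
      LinearMap.smul_apply, hB x b]
    field_simp
    ring

variable (g : ℕ → V)

lemma reflL_sub_smul (m : ℕ) (x y : V) (c : ℂ) :
    reflL B g m (x - c • y) = reflL B g m x - c • reflL B g m y := by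
  induction m generalizing x y with
  | zero => rfl
  | succ m ih => simp only [reflL, sRefl_sub_smul, ih]

lemma apply_reflL_reflL (hB : ∀ x y, B x y = B y x) (m : ℕ) (x y : V) :
    B (reflL B g m x) (reflL B g m y) = B x y := by
  induction m generalizing x y with
  | zero => rfl
  | succ m ih => simp only [reflL, ih, apply_sRefl_sRefl B hB]

lemma reflL_reflR (m : ℕ) (x : V) : reflL B g m (reflR B g m x) = x := by
  induction m with
  | zero => rfl
  | succ m ih => simp only [reflL, reflR, sRefl_sRefl, ih]

lemma reflR_reflL (m : ℕ) (x : V) : reflR B g m (reflL B g m x) = x := by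
  induction m generalizing x with
  | zero => rfl
  | succ m ih => simp only [reflL, reflR, ih, sRefl_sRefl]

def gamSeq (k : ℕ) : V := reflL B g k (g k)

lemma reflL_eq_sub_sum (m : ℕ) (x : V) :
    reflL B g m x = x - ∑ j ∈ range m, cartan B (g j) x • gamSeq B g j := by
  induction m generalizing x with
  | zero => simp [reflL]
  | succ m ih =>
    rw [reflL, sRefl, reflL_sub_smul, ih, sum_range_succ, gamSeq]
    abel

lemma cartan_gamSeq (hB : ∀ x y, B x y = B y x) (m : ℕ) (x : V) :
    cartan B (gamSeq B g m) x = cartan B (g m) (reflR B g m x) := by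
  conv_lhs => rw [gamSeq, ← reflL_reflR B g m x]
  simp only [cartan, apply_reflL_reflL B g hB]

lemma reflR_eq_sub_sum (hB : ∀ x y, B x y = B y x) (m : ℕ) (x : V) :
    reflR B g m x = x - ∑ j ∈ range m, cartan B (gamSeq B g j) x • g j := by
  induction m with
  | zero => simp [reflR]
  | succ m ih =>
    rw [reflR, sRefl, ← cartan_gamSeq B g hB, ih, sum_range_succ]
    abel

lemma gamSeq_eq_add_sum (hB : ∀ x y, B x y = B y x) (k : ℕ) :
    gamSeq B g k = g k + ∑ j ∈ range k, cartan B (gamSeq B g j) (gamSeq B g k) • g j := by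
  have h := reflR_eq_sub_sum B g hB k (gamSeq B g k)
  rw [gamSeq, reflR_reflL, ← gamSeq] at h
  rw [h]
  abel

end Reflections

section Matrices

variable {ι K : Type*} [Fintype ι]

lemma Matrix.BlockTriangular.mul_apply_self [LinearOrder ι] [CommSemiring K] {M N : Matrix ι ι K}
    (hM : M.BlockTriangular id) (hN : N.BlockTriangular id) (i : ι) :
    (M * N) i i = M i i * N i i := by
  rw [mul_apply, sum_eq_single i]
  · intro j _ hji
    rcases hji.lt_or_gt with hj | hj
    · rw [hM hj, zero_mul]
    · rw [hN hj, mul_zero]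
  · simp

lemma eq_one_of_diagonal_mul_eq_transpose_mul_diagonal [LinearOrder ι] [Field K] {d : ι → K}
    (hd : ∀ i, d i ≠ 0) {X Y : Matrix ι ι K} (hX : X.BlockTriangular id)
    (hX1 : ∀ i, X i i = 1) (hY : Y.BlockTriangular id)
    (h : diagonal d * X = Yᵀ * diagonal d) : X = 1 := by
  ext i k
  rcases lt_trichotomy i k with hik | rfl | hki
  · have hentry := congrFun (congrFun h i) k
    rw [diagonal_mul, mul_diagonal, transpose_apply, hY hik, zero_mul] at hentry
    rw [one_apply_ne hik.ne, (mul_eq_zero.mp hentry).resolve_left (hd i)]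
  · rw [hX1, one_apply_eq]
  · rw [hX hki, one_apply_ne hki.ne']

lemma diagonal_mul_mul_eq_transpose_mul_diagonal [DecidableEq ι] [CommRing K]
    {D Q R G H : Matrix ι ι K}
    (hQ : D * Q + Qᵀ * D = (2 : K) • G) (hR : D * R + Rᵀ * D = (2 : K) • H)
    (hGR : G * R = Qᵀ * H) :
    D * (Q * R) = (R * Q)ᵀ * D := by
  calc D * (Q * R) = (D * Q + Qᵀ * D) * R - Qᵀ * (D * R) := by noncomm_ring
    _ = Qᵀ * ((2 : K) • H) - Qᵀ * (D * R) := by rw [hQ, smul_mul_assoc, hGR, mul_smul_comm]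
    _ = (R * Q)ᵀ * D := by rw [← hR, transpose_mul]; noncomm_ring

lemma mulVec_eq_iff_eq_mulVec_of_mul_eq_one [DecidableEq ι] [CommRing K] {Q R : Matrix ι ι K}
    (h : Q * R = 1) {v w : ι → K} : R *ᵥ w = v ↔ w = Q *ᵥ v := by
  constructor
  · rintro rfl
    rw [mulVec_mulVec, h, one_mulVec]
  · rintro rfl
    rw [mulVec_mulVec, mul_eq_one_comm.mp h, one_mulVec]

end Matrices

section Gram

variable {ι κ κ' V : Type*} [Fintype κ] [AddCommGroup V] [Module ℂ V]
  (B : V →ₗ[ℂ] V →ₗ[ℂ] ℂ)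

def gramMatrix (u : ι → V) (v : κ' → V) : Matrix ι κ' ℂ := of fun i j => B (u i) (v j)

lemma gramMatrix_transpose (hB : ∀ x y, B x y = B y x) (u : ι → V) (v : κ' → V) :
    (gramMatrix B u v)ᵀ = gramMatrix B v u := by
  ext i j
  exact hB _ _

lemma gramMatrix_eq_mul {u : ι → V} {v : κ → V} {w : κ' → V} {P : Matrix κ κ' ℂ}
    (hw : ∀ k, w k = ∑ j, P j k • v j) : gramMatrix B u w = gramMatrix B u v * P := by
  ext i k
  simp [gramMatrix, hw, mul_apply, mul_comm]

end Gram

section Qmat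

variable {n : ℕ} {V : Type*} [AddCommGroup V] [Module ℂ V] (B : V →ₗ[ℂ] V →ₗ[ℂ] ℂ)

lemma Qmat_blockTriangular (v : Fin n → V) : (Qmat B v).BlockTriangular id := by
  intro i j (hji : j < i)
  simp [Qmat, hji.ne', hji.not_gt]

lemma Qmat_apply_self (v : Fin n → V) (i : Fin n) : Qmat B v i i = 1 := by
  simp [Qmat]

lemma diagonal_mul_Qmat_add_transpose_mul_diagonal (hB : ∀ x y, B x y = B y x)
    {v : Fin n → V} (hv : ∀ i, B (v i) (v i) ≠ 0) :
    diagonal (fun i => B (v i) (v i)) * Qmat B v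
        + (Qmat B v)ᵀ * diagonal (fun i => B (v i) (v i))
      = (2 : ℂ) • gramMatrix B v v := by
  ext i j
  simp only [Matrix.add_apply, diagonal_mul, mul_diagonal, transpose_apply, Matrix.smul_apply,
    gramMatrix, of_apply, smul_eq_mul]
  rcases lt_trichotomy i j with hij | rfl | hji
  · simp only [Qmat, of_apply, hij.ne, hij.ne', hij, hij.not_gt, if_false, if_true, cartan]
    field_simp [hv i]
    ring
  · simp only [Qmat, of_apply, if_true]
    ring
  · simp only [Qmat, of_apply, hji.ne, hji.ne', hji, hji.not_gt, if_false, if_true, cartan,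
      hB (v i) (v j)]
    field_simp [hv j]
    ring

lemma sum_Qmat_smul (x y : Fin n → V) (k : Fin n) :
    ∑ j, Qmat B x j k • y j = y k + ∑ j ∈ Iio k, cartan B (x j) (x k) • y j := by
  have hsplit : ∀ j, Qmat B x j k • y j =
      (if j = k then y j else 0) + (if j < k then cartan B (x j) (x k) • y j else 0) := by
    intro j
    rcases lt_trichotomy j k with hjk | rfl | hkj
    · simp [Qmat, hjk, hjk.ne]
    · simp [Qmat]
    · simp [Qmat, hkj.ne', hkj.not_gt]
  rw [sum_congr rfl fun j _ => hsplit j, sum_add_distrib, sum_ite_eq', ← sum_filter,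
    filter_gt_eq_Iio]
  simp

end Qmat

lemma Fin.sum_Iio_val {M : Type*} [AddCommMonoid M] {n : ℕ} (f : ℕ → M) (k : Fin n) :
    ∑ j ∈ Iio k, f j = ∑ t ∈ range k, f t := by
  rw [← Nat.Iio_eq_range, ← Fin.map_valEmbedding_Iio, sum_map]
  rfl

section TAction

variable {n : ℕ} {V : Type*} [AddCommGroup V] [Module ℂ V] (B : V →ₗ[ℂ] V →ₗ[ℂ] ℂ)
  (β : Fin n → V)

omit [Module ℂ V] in
lemma gext_val (j : Fin n) : gext β j = β j := by
  simp [gext]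

lemma gam_eq_gamSeq (j : Fin n) : gam B β j = gamSeq B (gext β) j := by
  rw [gam, gamSeq, gext_val]

lemma apply_gam_gam_self (hB : ∀ x y, B x y = B y x) (j : Fin n) :
    B (gam B β j) (gam B β j) = B (β j) (β j) :=
  apply_reflL_reflL B _ hB _ _ _

lemma eq_sum_Qmat_smul_gam (k : Fin n) : β k = ∑ j, Qmat B β j k • gam B β j := by
  have h := reflL_eq_sub_sum B (gext β) k (β k)
  rw [← gam, ← Fin.sum_Iio_val] at h
  simp only [gext_val, ← gam_eq_gamSeq] at h
  rw [sum_Qmat_smul, h]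
  abel

lemma gam_eq_sum_Qmat_smul (hB : ∀ x y, B x y = B y x) (k : Fin n) :
    gam B β k = ∑ j, Qmat B (gam B β) j k • β j := by
  have h := gamSeq_eq_add_sum B (gext β) hB k
  rw [← Fin.sum_Iio_val] at h
  simp only [gext_val, ← gam_eq_gamSeq] at h
  rwa [sum_Qmat_smul]

lemma Qmat_gam_mul_Qmat (hB : ∀ x y, B x y = B y x) (hβ : ∀ j, B (β j) (β j) ≠ 0) :
    Qmat B (gam B β) * Qmat B β = 1 := by
  have hQ := diagonal_mul_Qmat_add_transpose_mul_diagonal B hB (v := gam B β)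
    fun j => (apply_gam_gam_self B β hB j).trans_ne (hβ j)
  simp only [apply_gam_gam_self B β hB] at hQ
  have hGR : gramMatrix B (gam B β) (gam B β) * Qmat B β
      = (Qmat B (gam B β))ᵀ * gramMatrix B β β := by
    rw [← gramMatrix_eq_mul B (eq_sum_Qmat_smul_gam B β), ← gramMatrix_transpose B hB β β,
      ← transpose_mul, ← gramMatrix_eq_mul B (gam_eq_sum_Qmat_smul B β hB),
      gramMatrix_transpose B hB]
  have hR := diagonal_mul_Qmat_add_transpose_mul_diagonal B hB hβ
  have hQ_upper := Qmat_blockTriangular B (gam B β)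
  have hR_upper := Qmat_blockTriangular B β
  refine eq_one_of_diagonal_mul_eq_transpose_mul_diagonal hβ (hQ_upper.mul hR_upper)
    (fun i => ?_) (hR_upper.mul hQ_upper) (diagonal_mul_mul_eq_transpose_mul_diagonal hQ hR hGR)
  rw [hQ_upper.mul_apply_self hR_upper, Qmat_apply_self, Qmat_apply_self, one_mul]

lemma bmap_eq_bmap_mulVec {u v : Fin n → V} {P : Matrix (Fin n) (Fin n) ℂ}
    (h : ∀ k, u k = ∑ j, P j k • v j) (w : Fin n → ℂ) : bmap u w = bmap v (P *ᵥ w) := by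
  simp only [bmap, h, mulVec, dotProduct, smul_sum, sum_smul, smul_smul]
  rw [sum_comm]
  exact sum_congr rfl fun j _ => sum_congr rfl fun k _ => by rw [mul_comm]

lemma apply_sub_lam_apply (hB : ∀ x y, B x y = B y x) (hβ : ∀ j, B (β j) (β j) ≠ 0)
    (j k : Fin n) : B (β k) (β j) - lam B β j k = B (β j) (β j) * Qmat B β j k := by
  rcases lt_trichotomy j k with hjk | rfl | hkj
  · simp only [lam, Qmat, of_apply, hjk, hjk.ne, if_true, if_false, cartan, hB (β k)]
    field_simp [hβ j]
    ring
  · simp [lam, Qmat]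
  · simp [lam, Qmat, hkj, hkj.ne', hkj.not_gt, hB (β k)]

lemma apply_bmap_sub_lam_mulVec (hB : ∀ x y, B x y = B y x) (hβ : ∀ j, B (β j) (β j) ≠ 0)
    (w : Fin n → ℂ) (j : Fin n) :
    B (bmap β w) (β j) - (lam B β *ᵥ w) j = B (β j) (β j) * (Qmat B β *ᵥ w) j := by
  simp only [bmap, map_sum, map_smul, LinearMap.sum_apply, LinearMap.smul_apply, smul_eq_mul,
    mulVec, dotProduct, mul_sum, ← sum_sub_distrib]
  refine sum_congr rfl fun k _ => ?_
  linear_combination w k * apply_sub_lam_apply B β hB hβ j k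

lemma lam_mulVec_eq_and_bmap_eq_iff (hB : ∀ x y, B x y = B y x)
    (hβ : ∀ j, B (β j) (β j) ≠ 0) (a : Fin n → ℂ) (ξ : V) (w : Fin n → ℂ) :
    (lam B β *ᵥ w = a ∧ bmap β w = ξ) ↔
      (Qmat B β *ᵥ w = (fun j => (B (β j) (β j))⁻¹ * (B ξ (β j) - a j)) ∧
        ξ = bmap (gam B β) (fun j => (B (β j) (β j))⁻¹ * (B ξ (β j) - a j))) := by
  have hbmap := bmap_eq_bmap_mulVec (eq_sum_Qmat_smul_gam B β) w
  have hkey := apply_bmap_sub_lam_mulVec B β hB hβ w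
  constructor
  · rintro ⟨rfl, rfl⟩
    have hRw : Qmat B β *ᵥ w =
        fun j => (B (β j) (β j))⁻¹ * (B (bmap β w) (β j) - (lam B β *ᵥ w) j) :=
      funext fun j => by rw [hkey, inv_mul_cancel_left₀ (hβ j)]
    exact ⟨hRw, by rw [← hRw, hbmap]⟩
  · rintro ⟨hRw, hξ⟩
    have hbw : bmap β w = ξ := by rw [hbmap, hRw, ← hξ]
    refine ⟨funext fun j => ?_, hbw⟩
    have hj := hkey j
    rw [hbw, hRw, mul_inv_cancel_left₀ (hβ j), sub_right_inj] at hj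
    exact hj

end TAction

theorem stmt11_general (n : ℕ) {V : Type*} [AddCommGroup V] [Module ℂ V]
    (B : V →ₗ[ℂ] V →ₗ[ℂ] ℂ) (hBsymm : ∀ x y, B x y = B y x)
    (β : Fin n → V) (hβ : ∀ j, B (β j) (β j) ≠ 0)
    (a : Fin n → ℂ) (ξ : V) :
    ((∃ w : Fin n → ℂ, (lam B β).mulVec w = a ∧ bmap β w = ξ) ↔
      ξ = ∑ j, ((B (β j) (β j))⁻¹ * (B ξ (β j) - a j)) • gam B β j) ∧
    (∀ w : Fin n → ℂ, (lam B β).mulVec w = a → bmap β w = ξ →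
      w = (Qmat B (gam B β)).mulVec
        (fun j => (B (β j) (β j))⁻¹ * (B ξ (β j) - a j))) := by
  set c : Fin n → ℂ := fun j => (B (β j) (β j))⁻¹ * (B ξ (β j) - a j)
  have hQR := Qmat_gam_mul_Qmat B β hBsymm hβ
  have hsolve : ∀ w, (lam B β *ᵥ w = a ∧ bmap β w = ξ) ↔
      (w = Qmat B (gam B β) *ᵥ c ∧ ξ = bmap (gam B β) c) :=
    fun w => (lam_mulVec_eq_and_bmap_eq_iff B β hBsymm hβ a ξ w).trans
      (and_congr_left' (mulVec_eq_iff_eq_mulVec_of_mul_eq_one hQR))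
  refine ⟨?_, fun w ha hb => ((hsolve w).1 ⟨ha, hb⟩).1⟩
  simp only [hsolve, exists_eq_left]
  rfl

theorem stmt11 (n : ℕ) (hn : 0 < n) {V : Type*} [AddCommGroup V] [Module ℂ V]
    (B : V →ₗ[ℂ] V →ₗ[ℂ] ℂ) (hBsymm : ∀ x y, B x y = B y x)
    (β : Fin n → V) (hβ : ∀ j, B (β j) (β j) ≠ 0)
    (a : Fin n → ℂ) (ξ : V) :
    ((∃ w : Fin n → ℂ, (lam B β).mulVec w = a ∧ bmap β w = ξ) ↔
      ξ = ∑ j, ((B (β j) (β j))⁻¹ * (B ξ (β j) - a j)) • gam B β j) ∧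
    (∀ w : Fin n → ℂ, (lam B β).mulVec w = a → bmap β w = ξ →
      w = (Qmat B (gam B β)).mulVec
        (fun j => (B (β j) (β j))⁻¹ * (B ξ (β j) - a j))) :=
  stmt11_general n B hBsymm β hβ a ξ
end
end
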